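/- Every zero μ of the monic polynomial p(z) = zⁿ + a_{n-1}z^{n-1} + … + a₁z + a₀ (n ≥ 2, complex coefficients) satisfies |μ| ≤ ((1/4)w(C²)² + (1/8)w(C²P + PC²) + (1/16)‖P‖²)^{1/4}, where C = C(p) is the Frobenius companion matrix and P = C*C + CC*. -/

import Mathlib

/-!
Let `A x = μ x` with `x ≠ 0` and pick `|c| = 1` with `c μ = |μ|`. The Rayleigh quotient of
`R = Re(c A)` at `x` is `|μ|`, so `|μ| ≤ ‖R‖`. Because `|c| = 1`, `4 R² = G + P` with
`G = 2 Re(c² A²)`, and the C*-identity gives `16 ‖R‖⁴ = ‖G + P‖² ≤ ‖G‖² + ‖G P + P G‖ + ‖P‖²`.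
Here `G P + P G = 2 Re(c² (A² P + P A²))`, and `‖Re T‖ ≤ w(T)` bounds the first two terms by
`4 w(A²)²` and `2 w(A² P + P A²)`. For the companion matrix, `(μⁿ⁻¹, …, μ, 1)` is an eigenvector
for every root `μ`.
-/

open Complex

variable {H : Type*} [NormedAddCommGroup H] [InnerProductSpace ℂ H] [CompleteSpace H]

/-- The numerical radius `w(T) = sup {|⟨Tx,x⟩| : ‖x‖ = 1}`. -/
noncomputable def numRadius (T : H →L[ℂ] H) : ℝ :=
  sSup {r : ℝ | ∃ x : H, ‖x‖ = 1 ∧ r = ‖(inner ℂ (T x) x : ℂ)‖}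

/-- The Crawford number `m(T) = inf {|⟨Tx,x⟩| : ‖x‖ = 1}`. -/
noncomputable def crawford (T : H →L[ℂ] H) : ℝ :=
  sInf {r : ℝ | ∃ x : H, ‖x‖ = 1 ∧ r = ‖(inner ℂ (T x) x : ℂ)‖}

/-- The real part `Re(T) = (T + T*)/2`. -/
noncomputable def reOp (T : H →L[ℂ] H) : H →L[ℂ] H := (2 : ℂ)⁻¹ • (T + star T)

/-- The imaginary part `Im(T) = (T - T*)/(2i)`. -/
noncomputable def imOp (T : H →L[ℂ] H) : H →L[ℂ] H := (2 * Complex.I)⁻¹ • (T - star T)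

/-- The Frobenius companion matrix of `z^n + a_{n-1} z^{n-1} + ⋯ + a_1 z + a_0`,
viewed as an operator on `ℂⁿ`: first row `(-a_{n-1}, …, -a_0)`, ones on the subdiagonal. -/
noncomputable def companionCLM (n : ℕ) (a : Fin n → ℂ) :
    EuclideanSpace ℂ (Fin n) →L[ℂ] EuclideanSpace ℂ (Fin n) :=
  Matrix.toEuclideanCLM (𝕜 := ℂ)
    (Matrix.of fun i j =>
      if (i : ℕ) = 0 then -a j.rev else if (i : ℕ) = (j : ℕ) + 1 then 1 else 0)

section NumericalRadius

omit [CompleteSpace H]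

variable (T : H →L[ℂ] H)

lemma bddAbove_numRadius_set :
    BddAbove {r : ℝ | ∃ x : H, ‖x‖ = 1 ∧ r = ‖(inner ℂ (T x) x : ℂ)‖} := by
  refine ⟨‖T‖, ?_⟩
  rintro r ⟨x, hx, rfl⟩
  calc ‖(inner ℂ (T x) x : ℂ)‖ ≤ ‖T x‖ * ‖x‖ := norm_inner_le_norm _ _
    _ ≤ ‖T‖ * ‖x‖ * ‖x‖ := by gcongr; exact T.le_opNorm x
    _ = ‖T‖ := by rw [hx, mul_one, mul_one]

lemma numRadius_nonneg : 0 ≤ numRadius T :=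
  Real.sSup_nonneg fun _ ⟨_, _, hr⟩ ↦ hr ▸ norm_nonneg _

lemma norm_inner_le_numRadius {x : H} (hx : ‖x‖ = 1) :
    ‖(inner ℂ (T x) x : ℂ)‖ ≤ numRadius T :=
  le_csSup (bddAbove_numRadius_set T) ⟨x, hx, rfl⟩

lemma norm_inner_le_numRadius_mul_sq (x : H) :
    ‖(inner ℂ (T x) x : ℂ)‖ ≤ numRadius T * ‖x‖ ^ 2 := by
  rcases eq_or_ne x 0 with rfl | hx
  · simp
  have hx' : ‖x‖ ≠ 0 := norm_ne_zero_iff.2 hx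
  have hunit := norm_inner_le_numRadius T (x := ((‖x‖⁻¹ : ℝ) : ℂ) • x)
    (by rw [norm_smul, norm_real, norm_inv, norm_norm, inv_mul_cancel₀ hx'])
  rw [map_smul, inner_smul_left, inner_smul_right, norm_mul, norm_mul, RCLike.norm_conj,
    norm_real, norm_inv, norm_norm, ← mul_assoc, ← sq, inv_pow] at hunit
  rwa [inv_mul_le_iff₀ (by positivity), mul_comm] at hunit

lemma numRadius_smul_of_norm_eq_one {c : ℂ} (hc : ‖c‖ = 1) : numRadius (c • T) = numRadius T := by
  simp only [numRadius, smul_apply, inner_smul_left, norm_mul, RCLike.norm_conj, hc, one_mul]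

end NumericalRadius

section RealPart

variable (T : H →L[ℂ] H)

lemma isSelfAdjoint_reOp : IsSelfAdjoint (reOp T) := by
  simp [IsSelfAdjoint, reOp, star_smul, add_comm]

lemma re_inner_reOp_apply_self (x : H) :
    re (inner ℂ (reOp T x) x) = re (inner ℂ (T x) x) := by
  rw [reOp, smul_apply, add_apply, inner_smul_left, inner_add_left,
    ContinuousLinearMap.star_eq_adjoint, ContinuousLinearMap.adjoint_inner_left,
    ← inner_conj_symm x, Complex.add_conj]
  simp

lemma norm_reOp_le_numRadius : ‖reOp T‖ ≤ numRadius T := by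
  rw [(reOp T).norm_eq_iSup_rayleighQuotient (isSelfAdjoint_reOp T).isSymmetric]
  refine ciSup_le fun x ↦ ?_
  rw [ContinuousLinearMap.rayleighQuotient, ContinuousLinearMap.reApplyInnerSelf_apply,
    RCLike.re_to_complex, re_inner_reOp_apply_self, abs_div, abs_sq]
  rcases eq_or_ne x 0 with rfl | hx
  · simpa using numRadius_nonneg T
  rw [div_le_iff₀ (by positivity)]
  exact (abs_re_le_norm _).trans (norm_inner_le_numRadius_mul_sq T x)

lemma reOp_mul_add_mul_reOp {P : H →L[ℂ] H} (hP : IsSelfAdjoint P) :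
    reOp T * P + P * reOp T = reOp (T * P + P * T) := by
  simp only [reOp, star_add, star_mul, hP.star_eq, smul_mul_assoc, mul_smul_comm, ← smul_add]
  noncomm_ring

lemma four_smul_reOp_smul_mul_self {c : ℂ} (hc : ‖c‖ = 1) (A : H →L[ℂ] H) :
    (4 : ℂ) • (reOp (c • A) * reOp (c • A)) =
      (2 : ℂ) • reOp (c ^ 2 • A ^ 2) + (star A * A + A * star A) := by
  have hcc : c * star c = 1 := by
    rw [Complex.star_def, Complex.mul_conj, Complex.normSq_eq_norm_sq, hc]; norm_num
  simp only [reOp, star_smul, smul_add, smul_mul_smul_comm, add_mul, mul_add, sq, star_mul,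
    mul_comm (star c) c, hcc]
  module

lemma norm_le_norm_reOp_smul_of_apply_eq_smul {A : H →L[ℂ] H} {x : H} (hx : x ≠ 0) {μ c : ℂ}
    (hAx : A x = μ • x) (hc : (‖μ‖ : ℂ) = c * μ) : ‖μ‖ ≤ ‖reOp (c • A)‖ := by
  have hquot : (reOp (c • A)).rayleighQuotient x = ‖μ‖ := by
    rw [ContinuousLinearMap.rayleighQuotient, ContinuousLinearMap.reApplyInnerSelf_apply,
      RCLike.re_to_complex, re_inner_reOp_apply_self, smul_apply, hAx, smul_smul, ← hc,
      inner_smul_left, conj_ofReal, re_ofReal_mul, ← RCLike.re_to_complex, inner_self_eq_norm_sq]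
    field_simp
  calc ‖μ‖ ≤ |(reOp (c • A)).rayleighQuotient x| := hquot ▸ le_abs_self _
    _ ≤ ‖reOp (c • A)‖ := (reOp (c • A)).rayleighQuotient_le_norm x

end RealPart

lemma IsSelfAdjoint.norm_add_sq_le {E : Type*} [NonUnitalNormedRing E] [StarRing E] [CStarRing E]
    {g p : E} (hgp : IsSelfAdjoint (g + p)) :
    ‖g + p‖ ^ 2 ≤ ‖g‖ ^ 2 + ‖g * p + p * g‖ + ‖p‖ ^ 2 := by
  have hsq : (g + p) * (g + p) = g * g + (g * p + p * g) + p * p := by noncomm_ring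
  calc ‖g + p‖ ^ 2 = ‖g * g + (g * p + p * g) + p * p‖ := by rw [← hgp.norm_mul_self, hsq]
    _ ≤ ‖g * g‖ + ‖g * p + p * g‖ + ‖p * p‖ := norm_add₃_le
    _ ≤ ‖g‖ ^ 2 + ‖g * p + p * g‖ + ‖p‖ ^ 2 := by
      gcongr <;> rw [sq] <;> exact norm_mul_le _ _

theorem norm_pow_four_le_of_apply_eq_smul (A : H →L[ℂ] H) {x : H} (hx : x ≠ 0) {μ : ℂ}
    (hAx : A x = μ • x) :
    ‖μ‖ ^ 4 ≤
      (1/4) * numRadius (A ^ 2) ^ 2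
        + (1/8) * numRadius (A ^ 2 * (star A * A + A * star A) + (star A * A + A * star A) * A ^ 2)
        + (1/16) * ‖star A * A + A * star A‖ ^ 2 := by
  obtain ⟨c, hc, hcμ⟩ := exists_norm_eq_mul_self μ
  set P := star A * A + A * star A
  have hP : IsSelfAdjoint P := by
    simp only [P, IsSelfAdjoint, star_add, star_mul, star_star, add_comm]
  have hc2 : ‖c ^ 2‖ = 1 := by rw [norm_pow, hc, one_pow]
  set G := (2 : ℂ) • reOp (c ^ 2 • A ^ 2)
  have hG : ‖G‖ ≤ 2 * numRadius (A ^ 2) := by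
    rw [norm_smul, norm_ofNat, ← numRadius_smul_of_norm_eq_one _ hc2]
    gcongr
    exact norm_reOp_le_numRadius _
  have hGP : ‖G * P + P * G‖ ≤ 2 * numRadius (A ^ 2 * P + P * A ^ 2) := by
    have : G * P + P * G = (2 : ℂ) • reOp (c ^ 2 • (A ^ 2 * P + P * A ^ 2)) := by
      rw [smul_add, ← smul_mul_assoc, ← mul_smul_comm, ← reOp_mul_add_mul_reOp _ hP, smul_add,
        ← smul_mul_assoc, ← mul_smul_comm]
    rw [this, norm_smul, norm_ofNat, ← numRadius_smul_of_norm_eq_one _ hc2]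
    gcongr
    exact norm_reOp_le_numRadius _
  have hGP_selfAdjoint : IsSelfAdjoint (G + P) :=
    ((IsSelfAdjoint.ofNat 2).smul (isSelfAdjoint_reOp _)).add hP
  have hGP_norm : 4 * ‖μ‖ ^ 2 ≤ ‖G + P‖ := by
    rw [← four_smul_reOp_smul_mul_self hc, norm_smul, norm_ofNat,
      (isSelfAdjoint_reOp _).norm_mul_self]
    gcongr
    exact norm_le_norm_reOp_smul_of_apply_eq_smul hx hAx hcμ
  calc ‖μ‖ ^ 4 = (4 * ‖μ‖ ^ 2) ^ 2 / 16 := by ring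
    _ ≤ ‖G + P‖ ^ 2 / 16 := by gcongr
    _ ≤ (‖G‖ ^ 2 + ‖G * P + P * G‖ + ‖P‖ ^ 2) / 16 := by
      gcongr; exact hGP_selfAdjoint.norm_add_sq_le
    _ ≤ ((2 * numRadius (A ^ 2)) ^ 2 + 2 * numRadius (A ^ 2 * P + P * A ^ 2) + ‖P‖ ^ 2) / 16 := by
      gcongr
    _ = _ := by ring

lemma companionCLM_apply_rev_powers {n : ℕ} (a : Fin n → ℂ) {μ : ℂ}
    (hμ : μ ^ n + ∑ k : Fin n, a k * μ ^ (k : ℕ) = 0) :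
    companionCLM n a (WithLp.toLp 2 fun j ↦ μ ^ (j.rev : ℕ))
      = μ • WithLp.toLp 2 fun j ↦ μ ^ (j.rev : ℕ) := by
  rw [companionCLM, Matrix.toEuclideanCLM_toLp, ← WithLp.toLp_smul]
  congr 1
  funext i
  simp only [Matrix.mulVec, dotProduct, Matrix.of_apply, Pi.smul_apply, smul_eq_mul]
  rcases eq_or_ne (i : ℕ) 0 with hi | hi
  · have hsum : ∑ j : Fin n, -a j.rev * μ ^ (j.rev : ℕ) = -∑ k : Fin n, a k * μ ^ (k : ℕ) := by
      rw [← Finset.sum_neg_distrib]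
      exact Fintype.sum_equiv Fin.revPerm _ _ fun j ↦ by simp
    have hpow : μ * μ ^ (i.rev : ℕ) = μ ^ n := by
      rw [← pow_succ', Fin.val_rev, hi]; congr 1; omega
    simp only [hi, if_true, hsum, hpow]
    linear_combination -hμ
  · let i' : Fin n := ⟨i - 1, by omega⟩
    rw [Finset.sum_eq_single i']
    · simp only [hi, if_false, i', Fin.val_rev, ← pow_succ']
      rw [if_pos (by omega), one_mul]
      congr 1; omega
    · intro j _ hj
      rw [if_neg hi, if_neg (fun h ↦ hj (Fin.ext (by simp [i']; omega))), zero_mul]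
    · simp

theorem stmt17_general (n : ℕ) (a : Fin n → ℂ) (μ : ℂ)
    (hμ : μ ^ n + ∑ k : Fin n, a k * μ ^ (k : ℕ) = 0) :
    ‖μ‖ ≤
      ((1/4) * numRadius (companionCLM n a ^ 2) ^ 2
        + (1/8) * numRadius (companionCLM n a ^ 2
              * (star (companionCLM n a) * companionCLM n a
                  + companionCLM n a * star (companionCLM n a))
            + (star (companionCLM n a) * companionCLM n a
                  + companionCLM n a * star (companionCLM n a))
              * companionCLM n a ^ 2)
        + (1/16) * ‖star (companionCLM n a) * companionCLM n a
            + companionCLM n a * star (companionCLM n a)‖ ^ 2) ^ ((1 : ℝ)/4) := by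
  have hn : n ≠ 0 := by rintro rfl; simp at hμ
  set v : EuclideanSpace ℂ (Fin n) := WithLp.toLp 2 fun j ↦ μ ^ (j.rev : ℕ)
  have hv : v ≠ 0 := fun h ↦ by
    have := congrArg (· ⟨n - 1, by omega⟩) h
    simp [v, Nat.sub_add_cancel (Nat.one_le_iff_ne_zero.2 hn)] at this
  have hbound := norm_pow_four_le_of_apply_eq_smul _ hv (companionCLM_apply_rev_powers a hμ)
  calc ‖μ‖ = (‖μ‖ ^ 4) ^ ((4 : ℕ)⁻¹ : ℝ) :=
        (Real.pow_rpow_inv_natCast (norm_nonneg μ) four_ne_zero).symm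
    _ ≤ _ := by rw [Nat.cast_ofNat, inv_eq_one_div]; gcongr

theorem stmt17 (n : ℕ) (hn : 2 ≤ n) (a : Fin n → ℂ) (μ : ℂ)
    (hμ : μ ^ n + ∑ k : Fin n, a k * μ ^ (k : ℕ) = 0) :
    ‖μ‖ ≤
      ((1/4) * numRadius (companionCLM n a ^ 2) ^ 2
        + (1/8) * numRadius (companionCLM n a ^ 2
              * (star (companionCLM n a) * companionCLM n a
                  + companionCLM n a * star (companionCLM n a))
            + (star (companionCLM n a) * companionCLM n a
                  + companionCLM n a * star (companionCLM n a))
              * companionCLM n a ^ 2)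
        + (1/16) * ‖star (companionCLM n a) * companionCLM n a
            + companionCLM n a * star (companionCLM n a)‖ ^ 2) ^ ((1 : ℝ)/4) :=
  stmt17_general n a μ hμ
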